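/- arXiv:2210.05723 — 2 statements merged into one kernel-verified Lean document; each statement's English description precedes it below -/
import Mathlib

section
/- Let 𝒫 be a finite set of properties, X ⊆ ℝⁿ a conically closed set (for all e, f ∈ X and all α, β ≥ 0, αe + βf ∈ X), and for each p ∈ 𝒫 let γ_p : ℝⁿ → ℝ be a scoring function. Suppose the strict epistemic pooling principle holds for summation pooling for all e, f ∈ X (for every p ∈ 𝒫, γ_p(e + f) > 0 ↔ γ_p(e) > 0 ∨ γ_p(f) > 0), and suppose every epistemic state is realized: for every subset Q ⊆ 𝒫 there exists e ∈ X with Γ(e) = Q, where Γ(e) = {p ∈ 𝒫 : γ_p(e) > 0}. Then n ≥ |𝒫|. -/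
/-!
Positive rescaling does not change the epistemic state `Γ e` of `e ∈ X`: pooling `a • e` with
`(b - a) • e` shows that `Γ (a • e)` grows with `a ≥ 0`, and pooling `k • e` with `e` shows that
it is constant along `(k + 1) • e`; bounding `c ≥ 0` by a natural number gives
`Γ (c • e) ⊆ Γ e`, and applying this to `c⁻¹` and `c • e` gives equality for `c > 0`. So the
state of a positive combination of elements of `X` is the union of their states. Now take
`E p ∈ X` with state `{p}`. A relation `∑ c p • E p = 0` equates the positive combinations
`∑ c⁺ p • E p` and `∑ c⁻ p • E p`, whose states are the disjoint sets `{p | 0 < c p}` and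
`{p | c p < 0}`; hence `c = 0`, the `E p` are linearly independent in `ℝⁿ`, and `|𝒫| ≤ n`.
-/

open Finset Function

def epistemicState {P V : Type*} (γ : P → V → ℝ) (e : V) : Set P :=
  {p | 0 < γ p e}

def IsConicallyClosed (𝕜 : Type*) {V : Type*} [Semiring 𝕜] [PartialOrder 𝕜] [AddCommMonoid V]
    [Module 𝕜 V] (X : Set V) : Prop :=
  ∀ e ∈ X, ∀ f ∈ X, ∀ α β : 𝕜, 0 ≤ α → 0 ≤ β → α • e + β • f ∈ X

def SatisfiesSumPooling {P V : Type*} [Add V] (Γ : V → Set P) (X : Set V) : Prop :=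
  ∀ e ∈ X, ∀ f ∈ X, Γ (e + f) = Γ e ∪ Γ f

namespace IsConicallyClosed

variable {𝕜 V ι : Type*} [Semiring 𝕜] [PartialOrder 𝕜] [AddCommMonoid V] [Module 𝕜 V]
  {X : Set V} {e : V} (hX : IsConicallyClosed 𝕜 X)
include hX

theorem smul_mem (he : e ∈ X) {c : 𝕜} (hc : 0 ≤ c) : c • e ∈ X := by
  simpa using hX e he e he c 0 hc le_rfl

theorem add_mem [ZeroLEOneClass 𝕜] {f : V} (he : e ∈ X) (hf : f ∈ X) : e + f ∈ X := by
  simpa using hX e he f hf 1 1 zero_le_one zero_le_one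

theorem zero_mem (he : e ∈ X) : (0 : V) ∈ X := by
  simpa using hX.smul_mem he le_rfl

theorem sum_smul_mem [ZeroLEOneClass 𝕜] (h0 : (0 : V) ∈ X) {s : Finset ι} {c : ι → 𝕜}
    {v : ι → V} (hc : ∀ i ∈ s, 0 ≤ c i) (hv : ∀ i ∈ s, v i ∈ X) : ∑ i ∈ s, c i • v i ∈ X :=
  sum_induction _ (· ∈ X) (fun _ _ => hX.add_mem) h0 fun i hi => hX.smul_mem (hv i hi) (hc i hi)

end IsConicallyClosed

namespace SatisfiesSumPooling

theorem zero_subset {V P : Type*} [AddZeroClass V] {X : Set V} {Γ : V → Set P} {e : V}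
    (hΓ : SatisfiesSumPooling Γ X) (h0 : (0 : V) ∈ X) (he : e ∈ X) : Γ 0 ⊆ Γ e := by
  have := hΓ e he 0 h0
  rw [add_zero] at this
  exact this ▸ Set.subset_union_right

variable {𝕜 V P ι : Type*} [Field 𝕜] [LinearOrder 𝕜] [IsStrictOrderedRing 𝕜]

section AddCommMonoid

variable [AddCommMonoid V] [Module 𝕜 V] {X : Set V} {e : V} {Γ : V → Set P}
  (hΓ : SatisfiesSumPooling Γ X) (hX : IsConicallyClosed 𝕜 X)
include hΓ hX

theorem smul_subset_smul (he : e ∈ X) {a b : 𝕜} (ha : 0 ≤ a) (hab : a ≤ b) :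
    Γ (a • e) ⊆ Γ (b • e) := by
  have hsplit : b • e = a • e + (b - a) • e := by rw [← add_smul, add_sub_cancel]
  rw [hsplit, hΓ _ (hX.smul_mem he ha) _ (hX.smul_mem he (sub_nonneg.mpr hab))]
  exact Set.subset_union_left

theorem natCast_add_one_smul (he : e ∈ X) (k : ℕ) : Γ (((k + 1 : ℕ) : 𝕜) • e) = Γ e := by
  induction k with
  | zero => simp
  | succ k ih =>
    have hsplit : ((k + 1 + 1 : ℕ) : 𝕜) • e = ((k + 1 : ℕ) : 𝕜) • e + e := by
      rw [Nat.cast_succ _, add_smul, one_smul]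
    rw [hsplit, hΓ _ (hX.smul_mem he (Nat.cast_nonneg _)) _ he, ih, Set.union_self]

theorem smul_subset [Archimedean 𝕜] (he : e ∈ X) {c : 𝕜} (hc : 0 ≤ c) : Γ (c • e) ⊆ Γ e := by
  obtain ⟨k, hk⟩ := exists_nat_ge c
  calc Γ (c • e) ⊆ Γ (((k + 1 : ℕ) : 𝕜) • e) :=
        hΓ.smul_subset_smul hX he hc (hk.trans (by exact_mod_cast k.le_succ))
    _ = Γ e := hΓ.natCast_add_one_smul hX he k

theorem smul_eq [Archimedean 𝕜] (he : e ∈ X) {c : 𝕜} (hc : 0 < c) : Γ (c • e) = Γ e := by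
  refine (hΓ.smul_subset hX he hc.le).antisymm ?_
  calc Γ e = Γ (c⁻¹ • c • e) := by rw [smul_smul, inv_mul_cancel₀ hc.ne', one_smul]
    _ ⊆ Γ (c • e) := hΓ.smul_subset hX (hX.smul_mem he hc.le) (inv_nonneg.mpr hc.le)

variable [Archimedean 𝕜] (h0 : (0 : V) ∈ X) {s : Finset ι} {c : ι → 𝕜} {v : ι → V}
  (hc : ∀ i ∈ s, 0 ≤ c i) (hv : ∀ i ∈ s, v i ∈ X)
include h0 hc hv

theorem subset_sum_smul {i : ι} (hi : i ∈ s) (hci : 0 < c i) :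
    Γ (v i) ⊆ Γ (∑ j ∈ s, c j • v j) := by
  classical
  have hrest : ∑ j ∈ s.erase i, c j • v j ∈ X :=
    hX.sum_smul_mem h0 (fun j hj => hc j (mem_of_mem_erase hj))
      fun j hj => hv j (mem_of_mem_erase hj)
  rw [← add_sum_erase s _ hi, hΓ _ (hX.smul_mem (hv i hi) hci.le) _ hrest,
    hΓ.smul_eq hX (hv i hi) hci]
  exact Set.subset_union_left

theorem exists_of_mem_sum_smul (hΓ0 : Γ 0 = ∅) {p : P} (hp : p ∈ Γ (∑ i ∈ s, c i • v i)) :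
    ∃ i ∈ s, 0 < c i ∧ p ∈ Γ (v i) := by
  classical
  induction s using Finset.induction_on with
  | empty => simp [hΓ0] at hp
  | insert a s ha ih =>
    have hca := hc a (mem_insert_self a s)
    have hva := hv a (mem_insert_self a s)
    have hrest : ∑ i ∈ s, c i • v i ∈ X :=
      hX.sum_smul_mem h0 (fun i hi => hc i (mem_insert_of_mem hi))
        fun i hi => hv i (mem_insert_of_mem hi)
    rw [sum_insert ha, hΓ _ (hX.smul_mem hva hca) _ hrest] at hp
    rcases hp with hp | hp
    · rcases hca.eq_or_lt with hca0 | hcapos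
      · simp [← hca0, hΓ0] at hp
      · exact ⟨a, mem_insert_self a s, hcapos, hΓ.smul_eq hX hva hcapos ▸ hp⟩
    · obtain ⟨i, hi, hci, hpi⟩ := ih (fun i hi => hc i (mem_insert_of_mem hi))
        (fun i hi => hv i (mem_insert_of_mem hi)) hp
      exact ⟨i, mem_insert_of_mem hi, hci, hpi⟩

end AddCommMonoid

section AddCommGroup

variable [Archimedean 𝕜] [AddCommGroup V] [Module 𝕜 V] {X : Set V} {Γ : V → Set P}
  (hΓ : SatisfiesSumPooling Γ X) (hX : IsConicallyClosed 𝕜 X) (hΓ0 : Γ 0 = ∅) {v : ι → V}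
  (hv : ∀ i, v i ∈ X) (hne : ∀ i, (Γ (v i)).Nonempty)
  (hdisj : Pairwise (Disjoint on fun i => Γ (v i)))
include hΓ hX hΓ0 hv hne hdisj

theorem not_pos_of_sum_smul_eq_zero {s : Finset ι} {g : ι → 𝕜}
    (hg : ∑ i ∈ s, g i • v i = 0) {i : ι} (hi : i ∈ s) : ¬ 0 < g i := by
  intro hgi
  have h0 := hX.zero_mem (hv i)
  have hsplit : ∑ j ∈ s, (g j)⁺ • v j = ∑ j ∈ s, (g j)⁻ • v j := by
    rw [← sub_eq_zero, ← sum_sub_distrib, ← hg]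
    simp only [← sub_smul, posPart_sub_negPart]
  obtain ⟨p, hpi⟩ := hne i
  have hp := hΓ.subset_sum_smul hX h0 (fun j _ => posPart_nonneg (g j)) (fun j _ => hv j) hi
    (posPart_pos hgi) hpi
  rw [hsplit] at hp
  obtain ⟨j, -, hgj, hpj⟩ :=
    hΓ.exists_of_mem_sum_smul hX h0 (fun j _ => negPart_nonneg (g j)) (fun j _ => hv j) hΓ0 hp
  have hij : i ≠ j := by
    rintro rfl
    exact hgj.ne' (negPart_eq_zero.mpr hgi.le)
  exact Set.disjoint_left.mp (hdisj hij) hpi hpj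

theorem linearIndependent : LinearIndependent 𝕜 v := by
  refine linearIndependent_iff'.mpr fun s g hg i hi => le_antisymm ?_ ?_
  · exact not_lt.mp (hΓ.not_pos_of_sum_smul_eq_zero hX hΓ0 hv hne hdisj hg hi)
  · have hg' : ∑ j ∈ s, (-g j) • v j = 0 := by simp [neg_smul, hg]
    exact neg_nonpos.mp (not_lt.mp (hΓ.not_pos_of_sum_smul_eq_zero hX hΓ0 hv hne hdisj hg' hi))

end AddCommGroup

end SatisfiesSumPooling

/-- If the strict epistemic pooling principle holds for summation pooling
on a conically closed set X ⊆ ℝⁿ for a finite set of properties 𝒫, and every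
epistemic state Q ⊆ 𝒫 is realized by some embedding in X, then n ≥ |𝒫|. -/
theorem sum_pooling_dimension_bound (n : ℕ) (P : Type*) [Fintype P]
    (X : Set (Fin n → ℝ))
    (hX : ∀ e ∈ X, ∀ f ∈ X, ∀ α β : ℝ, 0 ≤ α → 0 ≤ β → α • e + β • f ∈ X)
    (γ : P → (Fin n → ℝ) → ℝ)
    (hpool : ∀ e ∈ X, ∀ f ∈ X, ∀ p : P,
      γ p (e + f) > 0 ↔ (γ p e > 0 ∨ γ p f > 0))
    (hreal : ∀ Q : Set P, ∃ e ∈ X, ∀ p : P, γ p e > 0 ↔ p ∈ Q) :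
    Fintype.card P ≤ n := by
  have hΓ : SatisfiesSumPooling (epistemicState γ) X :=
    fun e he f hf => Set.ext (hpool e he f hf)
  choose E hEX hE using hreal
  have hstate : ∀ Q, epistemicState γ (E Q) = Q := fun Q => Set.ext (hE Q)
  have hΓ0 : epistemicState γ 0 = ∅ := Set.subset_empty_iff.mp <|
    hstate ∅ ▸ hΓ.zero_subset (IsConicallyClosed.zero_mem hX (hEX ∅)) (hEX ∅)
  have hli : LinearIndependent ℝ fun p => E {p} :=
    hΓ.linearIndependent hX hΓ0 (fun p => hEX {p}) (fun p => by simp [hstate])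
      fun p q hpq => by simpa [onFun, hstate] using hpq
  simpa using hli.fintype_card_le_finrank
end

section
/- Let X = ℝⁿ or X = [0,∞)ⁿ, and let γ_p : ℝⁿ → ℝ be continuous. Suppose the strict epistemic pooling principle holds for Hadamard (componentwise product) pooling for all e, f ∈ X, i.e., γ_p(e ⊙ f) > 0 ↔ (γ_p(e) > 0 ∨ γ_p(f) > 0). Then either γ_p(e) ≤ 0 for every e ∈ X, or γ_p(e) > 0 for every e ∈ X. -/
/-!
If some `e` satisfies `p`, then so does `e ⊙ 0 = 0`. If some `f` does not, then no positive
constant vector `t` satisfies `p`, since `f = t ⊙ (t⁻¹ f)` and `t⁻¹ f` is again admissible.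
Letting `t → 0⁺`, continuity gives `γ 0 ≤ 0`, a contradiction.
-/

open Set

/-- The strict epistemic pooling principle for the pooling operator `*` on `X`. -/
def StrictPooling {M : Type*} [Mul M] (γ : M → ℝ) (X : Set M) : Prop :=
  ∀ e ∈ X, ∀ f ∈ X, 0 < γ (e * f) ↔ 0 < γ e ∨ 0 < γ f

namespace StrictPooling

theorem pos_zero {M : Type*} [MulZeroClass M] {γ : M → ℝ} {X : Set M}
    (hγ : StrictPooling γ X) (h0 : (0 : M) ∈ X) {e : M} (he : e ∈ X) (hpos : 0 < γ e) :
    0 < γ 0 := by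
  simpa using (hγ e he 0 h0).mpr (Or.inl hpos)

theorem nonpos_const {ι : Type*} {γ : (ι → ℝ) → ℝ} {X : Set (ι → ℝ)}
    (hγ : StrictPooling γ X) (hnonneg : ∀ x, 0 ≤ x → x ∈ X)
    (hsmul : ∀ t : ℝ, 0 < t → ∀ x ∈ X, t • x ∈ X)
    {f : ι → ℝ} (hf : f ∈ X) (hneg : γ f ≤ 0) {t : ℝ} (ht : 0 < t) :
    γ (fun _ => t) ≤ 0 := by
  by_contra! hpos
  have hfactor : (fun _ => t) * t⁻¹ • f = f := by
    ext i
    simp [ht.ne']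
  have := (hγ _ (hnonneg _ fun _ => ht.le) _ (hsmul _ (inv_pos.mpr ht) f hf)).mpr (Or.inl hpos)
  rw [hfactor] at this
  linarith

end StrictPooling

theorem nonneg_mem_and_smul_mem_of_eq_univ_or_nonneg {ι : Type*} {X : Set (ι → ℝ)}
    (hX : X = univ ∨ X = {x | ∀ i, 0 ≤ x i}) :
    (∀ x, 0 ≤ x → x ∈ X) ∧ ∀ t : ℝ, 0 < t → ∀ x ∈ X, t • x ∈ X := by
  rcases hX with rfl | rfl
  · simp
  · exact ⟨fun x hx => hx, fun t ht x hx i => mul_nonneg ht.le (hx i)⟩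

/-- If γ_p is continuous and the strict epistemic pooling principle holds
for Hadamard pooling on X = ℝⁿ or X = [0,∞)ⁿ, then either Pos_p = ∅ or Neg_p = ∅,
i.e. γ_p(e) ≤ 0 for all e ∈ X or γ_p(e) > 0 for all e ∈ X. -/
theorem had_pooling_strict_continuous_trivial (n : ℕ) (X : Set (Fin n → ℝ))
    (hX : X = Set.univ ∨ X = {x : Fin n → ℝ | ∀ i, 0 ≤ x i})
    (γ : (Fin n → ℝ) → ℝ) (hcont : Continuous γ)
    (hpool : ∀ e ∈ X, ∀ f ∈ X,
      γ (fun i => e i * f i) > 0 ↔ (γ e > 0 ∨ γ f > 0)) :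
    (∀ e ∈ X, γ e ≤ 0) ∨ (∀ e ∈ X, γ e > 0) := by
  have hγ : StrictPooling γ X := hpool
  obtain ⟨hnonneg, hsmul⟩ := nonneg_mem_and_smul_mem_of_eq_univ_or_nonneg hX
  by_contra! h
  obtain ⟨⟨e, he, hpos⟩, f, hf, hneg⟩ := h
  have hzero_pos : 0 < γ 0 := hγ.pos_zero (hnonneg 0 le_rfl) he hpos
  have hzero_nonpos : γ (fun _ => 0) ≤ 0 := by
    have hdiag : Continuous fun t : ℝ => γ fun _ => t := by fun_prop
    exact hdiag.continuousWithinAt.closure_le (s := Ioi 0) (by simp) continuousWithinAt_const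
      fun t ht => hγ.nonpos_const hnonneg hsmul hf hneg ht
  exact hzero_nonpos.not_gt hzero_pos
end
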